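/- The probability generating functions ξ_{n,p}(u) of the distance moved D_{n,p} by symbol p under Fisher-Yates satisfy ξ_{n,p}(u) = (p/n)·ξ_{p,p}(u) + (1/n)∑_{j=1}^{n-p} u^j for 1 ≤ p < n, and ξ_{n,n}(u) = (1/n)[1 + ∑_{p=1}^{n-1} u^{n-p}·ξ_{n-1,p}(u)]. -/
import Mathlib


/-- The distance moved by a symbol in the Fisher–Yates algorithm, defined
recursively via the triangular decomposition.  At stage `k+1` (symbols
`0,…,k+1`), `q = π⁻¹(k+1)` and `σ = π ∘ τ(k+1,q)` fixes `k+1`. -/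
def distAux {N : ℕ} : ℕ → Equiv.Perm (Fin N) → Fin N → ℕ
  | 0, _, _ => 0
  | k + 1, π, p =>
    if h : k + 1 < N then
      let lst : Fin N := ⟨k + 1, h⟩
      let q := π⁻¹ lst
      if p = lst then
        if q = lst then 0 else (k + 1 - q.val) + distAux k (π * Equiv.swap lst q) q
      else if p = q then k + 1 - q.val else distAux k (π * Equiv.swap lst q) p
    else 0

/-- `distMoved π p` is the distance moved by symbol `p` (0-based) when the
Fisher–Yates algorithm produces `π ∈ Sₙ`. -/
def distMoved {n : ℕ} (π : Equiv.Perm (Fin n)) (p : Fin n) : ℕ :=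
  distAux (n - 1) π p

/-- `xi n p u` is the probability generating function `ξ_{n,p}(u)` of the
distance `D_{n,p}` moved by symbol `p` (1-based), evaluated at `u`. -/
def xi (n p : ℕ) (u : ℚ) : ℚ :=
  if h : 1 ≤ p ∧ p ≤ n then
    (∑ π : Equiv.Perm (Fin n), u ^ distMoved π ⟨p - 1, by omega⟩) / n.factorial
  else 0

def eperm {m : ℕ} (ρ : Equiv.Perm (Fin m)) : Equiv.Perm (Fin (m+1)) :=
  finSuccEquivLast.symm.permCongr ρ.optionCongr

@[simp] lemma eperm_castSucc {m : ℕ} (ρ : Equiv.Perm (Fin m)) (i : Fin m) :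
    eperm ρ i.castSucc = (ρ i).castSucc := by
  simp [eperm, Equiv.permCongr_apply]

@[simp] lemma eperm_last {m : ℕ} (ρ : Equiv.Perm (Fin m)) :
    eperm ρ (Fin.last m) = Fin.last m := by
  simp [eperm, Equiv.permCongr_apply]

lemma eperm_mul {m : ℕ} (ρ σ : Equiv.Perm (Fin m)) :
    eperm (ρ * σ) = eperm ρ * eperm σ := by
  ext x
  induction x using Fin.lastCases with
  | last => simp
  | cast i => simp [Equiv.Perm.mul_apply]

lemma eperm_one {m : ℕ} : eperm (1 : Equiv.Perm (Fin m)) = 1 := by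
  ext x
  induction x using Fin.lastCases with
  | last => simp
  | cast i => simp

lemma eperm_inv {m : ℕ} (ρ : Equiv.Perm (Fin m)) : (eperm ρ)⁻¹ = eperm ρ⁻¹ := by
  apply inv_eq_of_mul_eq_one_right
  rw [← eperm_mul, mul_inv_cancel, eperm_one]

lemma eperm_swap {m : ℕ} (a b : Fin m) :
    eperm (Equiv.swap a b) = Equiv.swap a.castSucc b.castSucc := by
  ext x
  induction x using Fin.lastCases with
  | last =>
    rw [eperm_last, Equiv.swap_apply_of_ne_of_ne (Fin.castSucc_lt_last a).ne'
      (Fin.castSucc_lt_last b).ne']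
  | cast i =>
    rw [eperm_castSucc, (Fin.castSucc_injective m).swap_apply]

lemma eperm_injective {m : ℕ} : Function.Injective (eperm (m := m)) := by
  intro ρ σ h
  apply Equiv.ext
  intro i
  have h2 : eperm ρ i.castSucc = eperm σ i.castSucc := by rw [h]
  simpa using h2

lemma distAux_succ {N : ℕ} (k : ℕ) (π : Equiv.Perm (Fin N)) (p : Fin N) (h : k + 1 < N) :
    distAux (k + 1) π p =
      if p = (⟨k + 1, h⟩ : Fin N) then
        if π⁻¹ ⟨k + 1, h⟩ = (⟨k + 1, h⟩ : Fin N) then 0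
        else (k + 1 - (π⁻¹ ⟨k + 1, h⟩).val)
          + distAux k (π * Equiv.swap ⟨k + 1, h⟩ (π⁻¹ ⟨k + 1, h⟩)) (π⁻¹ ⟨k + 1, h⟩)
      else if p = π⁻¹ ⟨k + 1, h⟩ then k + 1 - (π⁻¹ ⟨k + 1, h⟩).val
      else distAux k (π * Equiv.swap ⟨k + 1, h⟩ (π⁻¹ ⟨k + 1, h⟩)) p := by
  rw [distAux, dif_pos h]

lemma distAux_eperm {m : ℕ} : ∀ (k : ℕ) (ρ : Equiv.Perm (Fin m)) (p : Fin m), k < m →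
    distAux k (eperm ρ) p.castSucc = distAux k ρ p
  | 0, _, _, _ => rfl
  | k+1, ρ, p, hk => by
    have hk1 : k + 1 < m + 1 := Nat.lt_succ_of_lt hk
    have hcs : (⟨k+1, hk1⟩ : Fin (m+1)) = (⟨k+1, hk⟩ : Fin m).castSucc := rfl
    rw [distAux_succ k (eperm ρ) p.castSucc hk1, distAux_succ k ρ p hk]
    have hq : (eperm ρ)⁻¹ (⟨k+1, hk1⟩ : Fin (m+1)) = (ρ⁻¹ ⟨k+1, hk⟩).castSucc := by
      rw [eperm_inv, hcs, eperm_castSucc]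
    rw [hq]
    have hsw : eperm ρ * Equiv.swap (⟨k+1, hk1⟩ : Fin (m+1)) ((ρ⁻¹ ⟨k+1, hk⟩).castSucc)
        = eperm (ρ * Equiv.swap ⟨k+1, hk⟩ (ρ⁻¹ ⟨k+1, hk⟩)) := by
      rw [hcs, ← eperm_swap, ← eperm_mul]
    rw [hsw, hcs]
    have hk' : k < m := Nat.lt_of_succ_lt hk
    rw [distAux_eperm k _ (ρ⁻¹ ⟨k+1, hk⟩) hk', distAux_eperm k _ p hk']
    simp only [Fin.castSucc_inj, Fin.coe_castSucc]

lemma pi_inv_last {m : ℕ} (ρ : Equiv.Perm (Fin (m+1))) (q : Fin (m+2)) :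
    (eperm ρ * Equiv.swap (Fin.last (m+1)) q)⁻¹ (Fin.last (m+1)) = q := by
  rw [mul_inv_rev, Equiv.Perm.mul_apply, Equiv.swap_inv, eperm_inv, eperm_last,
    Equiv.swap_apply_left]

lemma pi_mul_swap {m : ℕ} (ρ : Equiv.Perm (Fin (m+1))) (q : Fin (m+2)) :
    (eperm ρ * Equiv.swap (Fin.last (m+1)) q) * Equiv.swap (Fin.last (m+1)) q = eperm ρ := by
  rw [mul_assoc, Equiv.swap_mul_self, mul_one]

lemma last_eq_mk {m : ℕ} : (Fin.last (m+1) : Fin (m+2)) = ⟨m+1, Nat.lt_succ_self _⟩ := rfl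

lemma distMoved_eq {m : ℕ} (π : Equiv.Perm (Fin (m+2))) (p : Fin (m+2)) :
    distMoved π p = distAux (m+1) π p := rfl

lemma dM_case1 {m : ℕ} (ρ : Equiv.Perm (Fin (m+1))) :
    distMoved (eperm ρ * Equiv.swap (Fin.last (m+1)) (Fin.last (m+1))) (Fin.last (m+1)) = 0 := by
  rw [distMoved_eq, distAux_succ m _ _ (Nat.lt_succ_self _), ← last_eq_mk]
  rw [if_pos rfl, if_pos (pi_inv_last ρ _)]

lemma dM_case2 {m : ℕ} (ρ : Equiv.Perm (Fin (m+1))) (q : Fin (m+1)) :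
    distMoved (eperm ρ * Equiv.swap (Fin.last (m+1)) q.castSucc) (Fin.last (m+1))
      = (m + 1 - q.val) + distMoved ρ q := by
  rw [distMoved_eq, distAux_succ m _ _ (Nat.lt_succ_self _), ← last_eq_mk]
  rw [if_pos rfl, pi_inv_last, if_neg (Fin.castSucc_lt_last q).ne, pi_mul_swap,
    distAux_eperm m ρ q (Nat.lt_succ_self _), Fin.coe_castSucc]
  rfl

lemma dM_case3 {m : ℕ} (ρ : Equiv.Perm (Fin (m+1))) (p : Fin (m+1)) :
    distMoved (eperm ρ * Equiv.swap (Fin.last (m+1)) p.castSucc) p.castSucc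
      = m + 1 - p.val := by
  rw [distMoved_eq, distAux_succ m _ _ (Nat.lt_succ_self _), ← last_eq_mk]
  rw [if_neg (Fin.castSucc_lt_last p).ne, pi_inv_last, if_pos rfl, Fin.coe_castSucc]

lemma dM_case4 {m : ℕ} (ρ : Equiv.Perm (Fin (m+1))) (p : Fin (m+1)) (q : Fin (m+2))
    (hq : q ≠ p.castSucc) :
    distMoved (eperm ρ * Equiv.swap (Fin.last (m+1)) q) p.castSucc = distMoved ρ p := by
  rw [distMoved_eq, distAux_succ m _ _ (Nat.lt_succ_self _), ← last_eq_mk]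
  rw [if_neg (Fin.castSucc_lt_last p).ne, pi_inv_last, if_neg (Ne.symm hq), pi_mul_swap,
    distAux_eperm m ρ p (Nat.lt_succ_self _)]
  rfl

lemma xi_eq (n p : ℕ) (h1 : 1 ≤ p) (h2 : p ≤ n) (u : ℚ) :
    xi n p u
      = (∑ π : Equiv.Perm (Fin n), u ^ distMoved π ⟨p - 1, by omega⟩) / n.factorial := by
  rw [xi, dif_pos ⟨h1, h2⟩]

lemma sum_perm {m : ℕ} (f : Equiv.Perm (Fin (m+2)) → ℚ) :
    ∑ π : Equiv.Perm (Fin (m+2)), f π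
      = ∑ q : Fin (m+2), ∑ ρ : Equiv.Perm (Fin (m+1)),
          f (eperm ρ * Equiv.swap (Fin.last (m+1)) q) := by
  have hΦ : Function.Bijective (fun x : Fin (m+2) × Equiv.Perm (Fin (m+1)) =>
      eperm x.2 * Equiv.swap (Fin.last (m+1)) x.1) := by
    rw [Fintype.bijective_iff_injective_and_card]
    constructor
    · rintro ⟨q, ρ⟩ ⟨q', ρ'⟩ h
      simp only at h
      have hq : q = q' := by
        have h2 := congrArg (fun π : Equiv.Perm (Fin (m+2)) => π⁻¹ (Fin.last (m+1))) h
        simpa only [pi_inv_last] using h2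
      subst hq
      have h3 : eperm ρ = eperm ρ' := mul_right_cancel h
      exact Prod.ext rfl (eperm_injective h3)
    · simp [Fintype.card_perm, Nat.factorial_succ]
  rw [← (Equiv.ofBijective _ hΦ).sum_comp f, Fintype.sum_prod_type]
  simp [Equiv.ofBijective_apply]

lemma lemA {m : ℕ} (p : ℕ) (h1 : 1 ≤ p) (h2 : p ≤ m + 1) (u : ℚ) :
    xi (m+2) p u
      = (1 / (m+2 : ℚ)) * u ^ (m + 2 - p) + (((m:ℚ)+1) / ((m:ℚ)+2)) * xi (m+1) p u := by
  have hp : p - 1 < m + 1 := by omega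
  set p0 : Fin (m+1) := ⟨p - 1, hp⟩ with hp0
  have hpc : (⟨p - 1, by omega⟩ : Fin (m+2)) = p0.castSucc := rfl
  set S : ℚ := ∑ ρ : Equiv.Perm (Fin (m+1)), u ^ distMoved ρ p0 with hS
  have hxi : xi (m+1) p u = S / (m+1).factorial := xi_eq (m+1) p h1 h2 u
  rw [xi_eq (m+2) p h1 (by omega) u, hpc, sum_perm, Fin.sum_univ_castSucc]
  have hlast : ∑ ρ : Equiv.Perm (Fin (m+1)),
      u ^ distMoved (eperm ρ * Equiv.swap (Fin.last (m+1)) (Fin.last (m+1))) p0.castSucc = S := by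
    refine Finset.sum_congr rfl fun ρ _ => ?_
    rw [dM_case4 ρ p0 _ (Fin.castSucc_lt_last p0).ne']
  have hin : ∀ q : Fin (m+1), ∑ ρ : Equiv.Perm (Fin (m+1)),
      u ^ distMoved (eperm ρ * Equiv.swap (Fin.last (m+1)) q.castSucc) p0.castSucc
      = S + (if q = p0 then ((m+1).factorial : ℚ) * u ^ (m + 2 - p) - S else 0) := by
    intro q
    rcases eq_or_ne q p0 with hq | hq
    · rw [if_pos hq, hq]
      have : ∀ ρ : Equiv.Perm (Fin (m+1)),
          u ^ distMoved (eperm ρ * Equiv.swap (Fin.last (m+1)) p0.castSucc) p0.castSucc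
          = u ^ (m + 2 - p) := by
        intro ρ
        rw [dM_case3]
        congr 1
        simp only [hp0]
        omega
      rw [Finset.sum_congr rfl fun ρ _ => this ρ, Finset.sum_const, Finset.card_univ,
        Fintype.card_perm, Fintype.card_fin]
      push_cast
      ring
    · rw [if_neg hq, add_zero]
      refine Finset.sum_congr rfl fun ρ _ => ?_
      rw [dM_case4 ρ p0 _ (by simpa [Fin.castSucc_inj] using hq)]
  rw [Finset.sum_congr rfl fun q _ => hin q, Finset.sum_add_distrib, Finset.sum_const,
    Finset.sum_ite_eq' Finset.univ p0, if_pos (Finset.mem_univ p0), hlast, Finset.card_univ,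
    Fintype.card_fin]
  rw [hxi]
  have hfac : ((m+2).factorial : ℚ) = (m+2) * (m+1).factorial := by
    rw [Nat.factorial_succ]; push_cast; ring
  have hne : ((m+1).factorial : ℚ) ≠ 0 := Nat.cast_ne_zero.2 (Nat.factorial_ne_zero _)
  have hne2 : ((m:ℚ)+2) ≠ 0 := by positivity
  rw [hfac]
  field_simp
  ring

lemma lemB (n : ℕ) (hn : 1 ≤ n) (u : ℚ) :
    xi n n u = (1 / (n:ℚ)) * (1 + ∑ p ∈ Finset.Icc 1 (n-1), u ^ (n - p) * xi (n-1) p u) := by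
  match n, hn with
  | 1, _ =>
    rw [xi_eq 1 1 le_rfl le_rfl]
    have h0 : ∀ (π : Equiv.Perm (Fin 1)) (p : Fin 1), distMoved π p = 0 := fun _ _ => rfl
    simp [h0]
  | (m+2), _ =>
    have hlastmk : (⟨m + 2 - 1, by omega⟩ : Fin (m+2)) = Fin.last (m+1) := rfl
    rw [xi_eq (m+2) (m+2) (by omega) le_rfl, hlastmk, sum_perm, Fin.sum_univ_castSucc]
    have hlast : ∑ ρ : Equiv.Perm (Fin (m+1)),
        u ^ distMoved (eperm ρ * Equiv.swap (Fin.last (m+1)) (Fin.last (m+1))) (Fin.last (m+1))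
        = ((m+1).factorial : ℚ) := by
      have h1 : ∀ ρ : Equiv.Perm (Fin (m+1)),
          u ^ distMoved (eperm ρ * Equiv.swap (Fin.last (m+1)) (Fin.last (m+1))) (Fin.last (m+1))
          = 1 := fun ρ => by rw [dM_case1, pow_zero]
      rw [Finset.sum_congr rfl fun ρ _ => h1 ρ, Finset.sum_const, Finset.card_univ,
        Fintype.card_perm, Fintype.card_fin, nsmul_eq_mul, mul_one]
    have hin : ∀ q : Fin (m+1), ∑ ρ : Equiv.Perm (Fin (m+1)),
        u ^ distMoved (eperm ρ * Equiv.swap (Fin.last (m+1)) q.castSucc) (Fin.last (m+1))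
        = u ^ (m + 1 - q.val) * (∑ ρ : Equiv.Perm (Fin (m+1)), u ^ distMoved ρ q) := by
      intro q
      rw [Finset.mul_sum]
      refine Finset.sum_congr rfl fun ρ _ => ?_
      rw [dM_case2, pow_add]
    have hxi : ∀ q : Fin (m+1), xi (m+1) (q.val + 1) u
        = (∑ ρ : Equiv.Perm (Fin (m+1)), u ^ distMoved ρ q) / (m+1).factorial := by
      intro q
      rw [xi_eq (m+1) (q.val+1) (by omega) (by omega) u]
      simp only [Nat.add_sub_cancel, Fin.eta]
    have hR : ∑ p ∈ Finset.Icc 1 (m+2-1), u ^ (m+2-p) * xi (m+2-1) p u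
        = ∑ q : Fin (m+1), u ^ (m+1-q.val)
            * ((∑ ρ : Equiv.Perm (Fin (m+1)), u ^ distMoved ρ q) / (m+1).factorial) := by
      have h1 : (m+2-1 : ℕ) = m+1 := rfl
      rw [h1, ← Finset.Ico_add_one_right_eq_Icc, Finset.sum_Ico_eq_sum_range]
      have h4 : (m+1+1-1 : ℕ) = m+1 := rfl
      rw [h4, ← Fin.sum_univ_eq_sum_range (fun i => u ^ (m+2-(1+i)) * xi (m+1) (1+i) u) (m+1)]
      refine Finset.sum_congr rfl fun q _ => ?_
      have h3 : 1 + q.val = q.val + 1 := by omega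
      simp only [h3, hxi q]
      have h2 : m + 2 - (q.val + 1) = m + 1 - q.val := by omega
      rw [h2]
    rw [hR, Finset.sum_congr rfl fun q _ => hin q, hlast]
    have hdiv : ∑ q : Fin (m+1), u ^ (m+1-q.val)
          * ((∑ ρ : Equiv.Perm (Fin (m+1)), u ^ distMoved ρ q) / (m+1).factorial)
        = (∑ q : Fin (m+1), u ^ (m+1-q.val)
            * (∑ ρ : Equiv.Perm (Fin (m+1)), u ^ distMoved ρ q)) / (m+1).factorial := by
      rw [Finset.sum_div]
      exact Finset.sum_congr rfl fun q _ => by ring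
    rw [hdiv]
    have hfac : ((m+2).factorial : ℚ) = ((m:ℚ)+2) * (m+1).factorial := by
      rw [Nat.factorial_succ]; push_cast; ring
    have hne : ((m+1).factorial : ℚ) ≠ 0 := Nat.cast_ne_zero.2 (Nat.factorial_ne_zero _)
    have hne2 : ((m:ℚ)+2) ≠ 0 := by positivity
    rw [hfac]
    push_cast
    field_simp
    ring

lemma key1 (p : ℕ) (hp : 1 ≤ p) (u : ℚ) : ∀ n : ℕ, p + 1 ≤ n →
    xi n p u = ((p : ℚ) / n) * xi p p u + (1 / n) * ∑ j ∈ Finset.Icc 1 (n - p), u ^ j := by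
  intro n hn
  induction n, hn using Nat.le_induction with
  | base =>
    obtain ⟨p', rfl⟩ : ∃ p', p = p' + 1 := ⟨p - 1, by omega⟩
    rw [show p' + 1 + 1 = p' + 2 from rfl]
    rw [lemA (m := p') (p' + 1) (by omega) (by omega) u]
    rw [show p' + 2 - (p' + 1) = 1 from by omega, Finset.Icc_self, Finset.sum_singleton]
    push_cast
    ring
  | succ n hn ih =>
    obtain ⟨n', rfl⟩ : ∃ n', n = n' + 1 := ⟨n - 1, by omega⟩
    rw [show n' + 1 + 1 = n' + 2 from rfl]
    rw [lemA (m := n') p hp (by omega) u, ih]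
    rw [show n' + 2 - p = (n' + 1 - p) + 1 from by omega,
      Finset.sum_Icc_succ_top (by omega : 1 ≤ n' + 1 - p + 1)]
    have hne1 : ((n' : ℚ) + 1) ≠ 0 := by positivity
    have hne2 : ((n' : ℚ) + 2) ≠ 0 := by positivity
    push_cast
    field_simp
    ring


/-- The recurrences
`ξ_{n,p}(u) = (p/n)·ξ_{p,p}(u) + (1/n)·∑_{j=1}^{n-p} u^j` for `1 ≤ p < n`, and
`ξ_{n,n}(u) = (1/n)·[1 + ∑_{p=1}^{n-1} u^{n-p}·ξ_{n-1,p}(u)]`. -/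
theorem xi_recurrences :
    (∀ n p : ℕ, 1 ≤ p → p < n → ∀ u : ℚ,
      xi n p u = ((p : ℚ) / n) * xi p p u
        + (1 / n) * ∑ j ∈ Finset.Icc 1 (n - p), u ^ j) ∧
    (∀ n : ℕ, 1 ≤ n → ∀ u : ℚ,
      xi n n u = (1 / n) * (1 + ∑ p ∈ Finset.Icc 1 (n - 1), u ^ (n - p) * xi (n - 1) p u)) := by
  exact ⟨fun n p hp hpn u => key1 p hp u n hpn, fun n hn u => lemB n hn u⟩
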